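/- Let A be a C*-algebra and B a closed *-subalgebra of A. For positive functionals f and g on B, the following are equivalent: f ≤ g if and only if there exist norm-preserving positive extensions f̃ and g̃ of f and g to A such that f̃ ≤ g̃. -/

import Mathlib

open scoped ComplexOrder

section CStarContinuousDefs

variable {A : Type} [NonUnitalCStarAlgebra A]

/-- A (continuous) linear functional on a C⋆-algebra is positive if `0 ≤ f (a⋆ * a)` for
every `a`. -/
def IsPosFnL (f : A →L[ℂ] ℂ) : Prop := ∀ a : A, 0 ≤ f (star a * a)

/-- Order on positive functionals: `f ≤ g` iff `g - f` is positive. -/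
def FnLEL (f g : A →L[ℂ] ℂ) : Prop := IsPosFnL (g - f)

/-- Absolute continuity `f ≪ g`: `f` is the pointwise limit of an increasing sequence of
positive functionals `fₙ` with `fₙ ≤ αₙ • g` for some positive reals `αₙ`. -/
def AbsContL (f g : A →L[ℂ] ℂ) : Prop :=
  ∃ (fn : ℕ → (A →L[ℂ] ℂ)) (α : ℕ → ℝ),
    (∀ n, IsPosFnL (fn n)) ∧
    (∀ n, 0 < α n) ∧
    (∀ n, FnLEL (fn n) (fn (n + 1))) ∧
    (∀ n, FnLEL (fn n) (((α n : ℂ)) • g)) ∧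
    (∀ a : A, Filter.Tendsto (fun n => fn n a) Filter.atTop (nhds (f a)))

variable (B : NonUnitalStarSubalgebra ℂ A) [IsClosed (B : Set A)]

/-- `ft` is a norm-preserving positive extension to `A` of the positive functional `f`
defined on the closed `⋆`-subalgebra `B`. -/
def IsNormPresExt (f : ↥B →L[ℂ] ℂ) (ft : A →L[ℂ] ℂ) : Prop :=
  IsPosFnL ft ∧ (∀ b : ↥B, ft ↑b = f b) ∧ ‖ft‖ = ‖f‖

end CStarContinuousDefs



section Auxiliary

open Filter Topology CStarAlgebra Complex Unitization

section OrderConstruction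
variable {C : Type} [NonUnitalCStarAlgebra C]

lemma exists_sqrt_of_inr_nonneg {c : C} (hc : 0 ≤ (c : Unitization ℂ C)) :
    ∃ s : C, star s * s = c := by
  have hsa : IsSelfAdjoint c := (isSelfAdjoint_inr (R := ℂ)).mp hc.isSelfAdjoint
  have hspec : ∀ x ∈ quasispectrum ℝ c, 0 ≤ x := by
    rw [Unitization.quasispectrum_eq_spectrum_inr' ℝ ℂ c]
    exact fun x hx => spectrum_nonneg_of_nonneg hc hx
  refine ⟨cfcₙ Real.sqrt c, ?_⟩
  have hs : IsSelfAdjoint (cfcₙ Real.sqrt c) := cfcₙ_predicate _ c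
  rw [hs.star_eq, ← cfcₙ_mul Real.sqrt Real.sqrt c]
  rw [cfcₙ_congr (fun x hx => Real.mul_self_sqrt (hspec x hx))]
  exact cfcₙ_id ℝ c

noncomputable def nonUnitalCStarOrder : PartialOrder C :=
  PartialOrder.lift (Unitization.inr (R := ℂ)) Unitization.inr_injective

lemma nonUnitalCStarStarOrderedRing :
    letI := nonUnitalCStarOrder (C := C); StarOrderedRing C := by
  letI := nonUnitalCStarOrder (C := C)
  refine StarOrderedRing.of_le_iff fun a b => ?_
  constructor
  · intro hab
    have h : 0 ≤ ((b - a : C) : Unitization ℂ C) := by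
      rw [Unitization.inr_sub, sub_nonneg]; exact hab
    obtain ⟨s, hs⟩ := exists_sqrt_of_inr_nonneg h
    exact ⟨s, by rw [hs]; abel⟩
  · rintro ⟨s, rfl⟩
    show ((a : Unitization ℂ C)) ≤ ((a + star s * s : C) : Unitization ℂ C)
    rw [Unitization.inr_add, Unitization.inr_mul, Unitization.inr_star]
    exact le_add_of_nonneg_right (star_mul_self_nonneg _)

end OrderConstruction

section CS
variable {C : Type} [NonUnitalCStarAlgebra C] (f : C →L[ℂ] ℂ)
  (hf : ∀ a : C, 0 ≤ f (star a * a))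

include hf

lemma posFn_selfconj (a : C) : (starRingEnd ℂ) (f (star a * a)) = f (star a * a) :=
  Complex.conj_eq_iff_im.mpr (by simpa using (Complex.le_def.mp (hf a)).2.symm)

lemma posFn_herm (a b : C) : f (star b * a) = (starRingEnd ℂ) (f (star a * b)) := by
  have key : ∀ u v : C, (starRingEnd ℂ) (f (star u * v)) + (starRingEnd ℂ) (f (star v * u))
      = f (star u * v) + f (star v * u) := by
    intro u v
    have h := posFn_selfconj f hf (u + v)
    have hu := posFn_selfconj f hf u
    have hv := posFn_selfconj f hf v
    simp only [star_add, add_mul, mul_add, map_add] at h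
    linear_combination h - hu - hv
  have k1 := key b a
  have k2 := key (Complex.I • b) a
  have e1 : star (Complex.I • b) * a = (-Complex.I) • (star b * a) := by
    rw [star_smul, smul_mul_assoc]; simp [Complex.conj_I]
  have e2 : star a * (Complex.I • b) = Complex.I • (star a * b) := by
    rw [mul_smul_comm]
  rw [e1, e2, f.map_smul, f.map_smul] at k2
  simp only [smul_eq_mul, map_mul, Complex.conj_I, Complex.conj_neg_I] at k2
  set X := f (star b * a)
  set Y := f (star a * b)
  have hI : Complex.I * Complex.I = -1 := Complex.I_mul_I
  have h2Y : 2 * (starRingEnd ℂ) Y = 2 * X := by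
    linear_combination k1 + Complex.I * k2 -
      ((starRingEnd ℂ) X - (starRingEnd ℂ) Y + X - Y) * hI
  linear_combination (-1/2 : ℂ) * h2Y

lemma posFn_cs (a b : C) :
    ‖f (star b * a)‖ ^ 2 ≤ (f (star a * a)).re * (f (star b * b)).re := by
  set w := f (star b * a) with hw
  set A' := (f (star a * a)).re with hA'
  set B' := (f (star b * b)).re with hB'
  have hA : 0 ≤ A' := (Complex.le_def.mp (hf a)).1
  have hB : 0 ≤ B' := (Complex.le_def.mp (hf b)).1
  have himA : (f (star a * a)).im = 0 := by simpa using (Complex.le_def.mp (hf a)).2.symm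
  have himB : (f (star b * b)).im = 0 := by simpa using (Complex.le_def.mp (hf b)).2.symm
  have key : ∀ r : ℝ, 0 ≤ A' - 2 * r * Complex.normSq w + r ^ 2 * Complex.normSq w * B' := by
    intro r
    have h0 := hf (a + ((-r : ℂ) * w) • b)
    set t : ℂ := (-r : ℂ) * w with ht
    have hexp : star (a + t • b) * (a + t • b)
        = star a * a + t • (star a * b) + (starRingEnd ℂ t) • (star b * a)
          + (t * starRingEnd ℂ t) • (star b * b) := by
      rw [star_add, star_smul]
      simp only [add_mul, mul_add, smul_mul_assoc, mul_smul_comm, smul_smul, smul_add,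
        RCLike.star_def]
      abel
    rw [hexp] at h0
    simp only [map_add, map_smul, smul_eq_mul] at h0
    have hherm : f (star a * b) = (starRingEnd ℂ) w := by
      rw [hw, posFn_herm f hf a b]; simp
    rw [hherm, ← hw] at h0
    have h1 : t * (starRingEnd ℂ) w = ((-r * Complex.normSq w : ℝ) : ℂ) := by
      rw [ht, mul_assoc, Complex.mul_conj]; push_cast; ring
    have h2 : (starRingEnd ℂ) t * w = ((-r * Complex.normSq w : ℝ) : ℂ) := by
      rw [ht]
      simp only [map_mul, map_neg, Complex.conj_ofReal]
      rw [mul_assoc, mul_comm ((starRingEnd ℂ) w) w, Complex.mul_conj]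
      push_cast; ring
    have h3 : t * starRingEnd ℂ t = ((r ^ 2 * Complex.normSq w : ℝ) : ℂ) := by
      have hn : Complex.normSq t = r ^ 2 * Complex.normSq w := by
        rw [ht, Complex.normSq_mul, Complex.normSq_neg, Complex.normSq_ofReal]
        ring
      rw [Complex.mul_conj, hn]
    rw [h1, h2, h3] at h0
    have hre := (Complex.le_def.mp h0).1
    simp only [Complex.add_re, Complex.mul_re, Complex.ofReal_re, Complex.ofReal_im,
      Complex.zero_re, himA, himB, ← hA', ← hB'] at hre
    linarith
  rw [Complex.sq_norm]
  set n := Complex.normSq w with hn'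
  have hn : 0 ≤ n := Complex.normSq_nonneg w
  rcases eq_or_lt_of_le hn with h0 | h0
  · nlinarith
  rcases eq_or_lt_of_le hB with hB0 | hB0
  · exfalso
    have hk := key ((A' + 1) / (2 * n))
    have hne : n ≠ 0 := ne_of_gt h0
    have he : 2 * ((A' + 1) / (2 * n)) * n = A' + 1 := by field_simp
    rw [← hB0] at hk
    simp only [mul_zero, add_zero] at hk
    rw [he] at hk
    linarith
  · have hk := key (1 / B')
    have hne : B' ≠ 0 := ne_of_gt hB0
    have : 0 ≤ A' - n / B' := by
      have e : A' - 2 * (1/B') * n + (1/B')^2 * n * B' = A' - n / B' := by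
        field_simp; ring
      linarith [e ▸ hk]
    calc n = (n / B') * B' := by field_simp
    _ ≤ A' * B' := by nlinarith

end CS

section AU
variable {C : Type} [NonUnitalCStarAlgebra C] [PartialOrder C] [StarOrderedRing C]

lemma tendsto_mul_mul (b : C) :
    Tendsto (fun e : C => e * b * e) (approximateUnit C) (𝓝 b) := by
  have hl := increasingApproximateUnit C
  have h1 : Tendsto (fun e : C => e * b) (approximateUnit C) (𝓝 b) :=
    hl.tendsto_mul_right b
  have h2 : Tendsto (fun e : C => b * e) (approximateUnit C) (𝓝 b) :=
    hl.tendsto_mul_left b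
  rw [tendsto_iff_norm_sub_tendsto_zero] at h1 h2 ⊢
  have key : ∀ᶠ e in approximateUnit C, ‖e * b * e - b‖ ≤ ‖e * b - b‖ + ‖b * e - b‖ := by
    filter_upwards [hl.eventually_norm] with e he
    calc ‖e * b * e - b‖ = ‖(e * b - b) * e + (b * e - b)‖ := by congr 1; noncomm_ring
    _ ≤ ‖(e * b - b) * e‖ + ‖b * e - b‖ := norm_add_le _ _
    _ ≤ ‖e * b - b‖ * ‖e‖ + ‖b * e - b‖ := by gcongr; exact norm_mul_le _ _
    _ ≤ ‖e * b - b‖ * 1 + ‖b * e - b‖ := by gcongr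
    _ = ‖e * b - b‖ + ‖b * e - b‖ := by ring
  refine squeeze_zero' (.of_forall fun e => norm_nonneg _) key ?_
  simpa using h1.add h2

lemma tendsto_sq (f : C →L[ℂ] ℂ) (hf : ∀ a : C, 0 ≤ f (star a * a)) :
    Tendsto (fun e : C => f (e * e)) (approximateUnit C) (𝓝 (‖f‖ : ℂ)) := by
  have hl := increasingApproximateUnit C
  rcases eq_or_lt_of_le (norm_nonneg f) with h0 | hpos
  · have hf0 : f = 0 := by rw [← norm_eq_zero]; exact h0.symm
    simp only [hf0, ContinuousLinearMap.zero_apply, norm_zero]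
    simpa using tendsto_const_nhds
  have hreal : ∀ᶠ e in approximateUnit C, f (e * e) = ((f (e * e)).re : ℂ) := by
    filter_upwards [hl.eventually_star_eq] with e he
    have h' := hf e
    rw [he] at h'
    have h := (Complex.le_def.mp h').2
    rw [← Complex.re_add_im (f (e * e)), ← h]
    simp
  have hub : ∀ᶠ e in approximateUnit C, (f (e * e)).re ≤ ‖f‖ := by
    filter_upwards [hl.eventually_norm] with e hn
    calc (f (e * e)).re ≤ ‖f (e * e)‖ := Complex.re_le_norm _
    _ = ‖f (e * e)‖ := rfl
    _ ≤ ‖f‖ * ‖e * e‖ := f.le_opNorm _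
    _ ≤ ‖f‖ * (‖e‖ * ‖e‖) := by gcongr; exact norm_mul_le _ _
    _ ≤ ‖f‖ * (1 * 1) := by gcongr
    _ = ‖f‖ := by ring
  have hre : Tendsto (fun e : C => (f (e * e)).re) (approximateUnit C) (𝓝 ‖f‖) := by
    rw [Metric.tendsto_nhds]
    intro ε hε
    set δ := min (ε / 3) ‖f‖ with hδ
    have hδ3 : δ ≤ ε / 3 := min_le_left _ _
    have hδF : δ ≤ ‖f‖ := min_le_right _ _
    have hδpos : 0 < δ := lt_min (by linarith) hpos
    obtain ⟨c, hc1, hc2⟩ := f.exists_lt_apply_of_lt_opNorm (r := ‖f‖ - δ) (by linarith)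
    have hc1' : ‖c‖ ≤ 1 := hc1.le
    have ht : Tendsto (fun e : C => f (e * c)) (approximateUnit C) (𝓝 (f c)) :=
      (f.continuous.tendsto _).comp (hl.tendsto_mul_right c)
    have hev : ∀ᶠ e in approximateUnit C, ‖f‖ - δ < ‖f (e * c)‖ :=
      ht.norm.eventually (eventually_gt_nhds hc2)
    filter_upwards [hev, hub, hl.eventually_star_eq] with e h1 h2 h3
    set t := (f (e * e)).re
    have hcs := posFn_cs f hf c e
    rw [h3] at hcs
    have hcc : (f (star c * c)).re ≤ ‖f‖ := by
      calc (f (star c * c)).re ≤ ‖f (star c * c)‖ := Complex.re_le_norm _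
      _ = ‖f (star c * c)‖ := rfl
      _ ≤ ‖f‖ * ‖star c * c‖ := f.le_opNorm _
      _ ≤ ‖f‖ * (‖star c‖ * ‖c‖) := by gcongr; exact norm_mul_le _ _
      _ ≤ ‖f‖ * (1 * 1) := by gcongr <;> simp [norm_star, hc1']
      _ = ‖f‖ := by ring
    have hcs0 : 0 ≤ (f (star c * c)).re := (Complex.le_def.mp (hf c)).1
    have ht0 : 0 ≤ t := by
      have h' := hf e
      rw [h3] at h'
      simpa using (Complex.le_def.mp h').1
    have hkey : (‖f‖ - δ) ^ 2 < ‖f‖ * t := by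
      have habs : (‖f‖ - δ) ^ 2 < ‖f (e * c)‖ ^ 2 := by
        have h4 : (0:ℝ) ≤ ‖f‖ - δ := by linarith
        have : ‖f (e * c)‖ = ‖f (e * c)‖ := rfl
        nlinarith [h1]
      calc (‖f‖ - δ) ^ 2 < ‖f (e * c)‖ ^ 2 := habs
      _ ≤ (f (star c * c)).re * t := hcs
      _ ≤ ‖f‖ * t := by gcongr
    rw [Real.dist_eq, abs_lt]
    constructor
    · nlinarith
    · nlinarith
  have := (Complex.continuous_ofReal.tendsto _).comp hre
  exact this.congr' (hreal.mono fun e he => he.symm)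

lemma posFn_norm_add (f g : C →L[ℂ] ℂ) (hf : ∀ a : C, 0 ≤ f (star a * a))
    (hg : ∀ a : C, 0 ≤ g (star a * a)) : ‖f + g‖ = ‖f‖ + ‖g‖ := by
  have hl := increasingApproximateUnit C
  haveI : (approximateUnit C).NeBot := hl.toIsApproximateUnit.neBot
  refine le_antisymm (norm_add_le f g) ?_
  have hs : Tendsto (fun e : C => (f + g) (e * e)) (approximateUnit C)
      (𝓝 ((‖f‖ + ‖g‖ : ℝ) : ℂ)) := by
    simp only [ContinuousLinearMap.add_apply]
    push_cast
    exact (tendsto_sq f hf).add (tendsto_sq g hg)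
  have hb : ∀ᶠ e in approximateUnit C, ‖(f + g) (e * e)‖ ≤ ‖f + g‖ := by
    filter_upwards [hl.eventually_norm] with e hn
    calc ‖(f + g) (e * e)‖ ≤ ‖f + g‖ * ‖e * e‖ := (f + g).le_opNorm _
    _ ≤ ‖f + g‖ * (‖e‖ * ‖e‖) := by gcongr; exact norm_mul_le _ _
    _ ≤ ‖f + g‖ * (1 * 1) := by gcongr
    _ = ‖f + g‖ := by ring
  have hle := le_of_tendsto hs.norm hb
  have hnorm : ‖((‖f‖ + ‖g‖ : ℝ) : ℂ)‖ = ‖f‖ + ‖g‖ := by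
    rw [Complex.norm_real]
    exact abs_of_nonneg (by positivity)
  rwa [hnorm] at hle

end AU

section Unital
variable {D : Type} [CStarAlgebra D]

lemma posFn_smul_nonneg [PartialOrder D] [StarOrderedRing D] {a : D} (ha : 0 ≤ a)
    {r : ℝ} (hr : 0 ≤ r) : 0 ≤ (r : ℂ) • a := by
  rw [StarOrderedRing.nonneg_iff] at ha ⊢
  induction ha using AddSubmonoid.closure_induction with
  | mem x hx =>
    obtain ⟨s, rfl⟩ := hx
    refine AddSubmonoid.subset_closure ⟨(Real.sqrt r : ℂ) • s, ?_⟩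
    show star ((Real.sqrt r : ℂ) • s) * ((Real.sqrt r : ℂ) • s) = (r : ℂ) • (star s * s)
    rw [star_smul, smul_mul_smul_comm]
    congr 1
    rw [RCLike.star_def, Complex.conj_ofReal, ← Complex.ofReal_mul,
      Real.mul_self_sqrt hr]
  | zero => simpa using AddSubmonoid.zero_mem _
  | add x y _ _ hx hy => rw [smul_add]; exact AddSubmonoid.add_mem _ hx hy

lemma posFn_of_apply_one_eq_norm [Nontrivial D] (φ : D →L[ℂ] ℂ) (h1 : φ 1 = (‖φ‖ : ℂ)) :
    ∀ a : D, 0 ≤ φ (star a * a) := by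
  letI : PartialOrder D := CStarAlgebra.spectralOrder D
  haveI : StarOrderedRing D := CStarAlgebra.spectralOrderedRing D
  -- selfadjoint elements have real image
  have him : ∀ a : D, IsSelfAdjoint a → (φ a).im = 0 := by
    intro a ha
    rcases eq_or_lt_of_le (norm_nonneg φ) with h0 | hpos
    · have : φ = 0 := by rw [← norm_eq_zero]; exact h0.symm
      simp [this]
    set t := (φ a).im with htdef
    have key : ∀ n : ℝ, 2 * t * ‖φ‖ * n ≤ ‖φ‖ ^ 2 * ‖a‖ ^ 2 - t ^ 2 := by
      intro n
      set x := a + ((n : ℂ) * Complex.I) • (1 : D) with hx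
      have hexp : star x * x = a * a + ((n : ℂ) ^ 2) • 1 := by
        rw [hx, star_add, star_smul, ha.star_eq, star_one]
        rw [add_mul, mul_add, mul_add]
        simp only [smul_mul_assoc, mul_smul_comm, smul_smul, mul_one, one_mul]
        rw [RCLike.star_def, map_mul, Complex.conj_ofReal, Complex.conj_I]
        match_scalars
        · ring
        · ring
        · ring_nf
          rw [Complex.I_sq]
          ring
      have hnorm : ‖x‖ ^ 2 ≤ ‖a‖ ^ 2 + n ^ 2 := by
        have hsq : ‖x‖ ^ 2 = ‖star x * x‖ := by
          rw [CStarRing.norm_star_mul_self]; ring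
        rw [hsq, hexp]
        calc ‖a * a + ((n : ℂ) ^ 2) • (1 : D)‖ ≤ ‖a * a‖ + ‖((n : ℂ) ^ 2) • (1 : D)‖ :=
          norm_add_le _ _
        _ ≤ ‖a‖ * ‖a‖ + ‖((n : ℂ) ^ 2)‖ * ‖(1 : D)‖ := by
            gcongr
            · exact norm_mul_le _ _
            · exact (norm_smul _ _).le
        _ = ‖a‖ ^ 2 + n ^ 2 := by
            rw [norm_one, mul_one, ← Complex.ofReal_pow, Complex.norm_real,
              Real.norm_eq_abs, _root_.abs_of_nonneg (by positivity : (0:ℝ) ≤ n ^ 2)]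
            ring
      have happ : (t + n * ‖φ‖) ^ 2 ≤ ‖φ‖ ^ 2 * (‖a‖ ^ 2 + n ^ 2) := by
        have him : (φ x).im = t + n * ‖φ‖ := by
          rw [hx, map_add, map_smul, h1]
          simp [htdef]
        have h2 : ‖φ x‖ ^ 2 ≤ ‖φ‖ ^ 2 * ‖x‖ ^ 2 := by
          have := φ.le_opNorm x
          nlinarith [norm_nonneg (φ x), norm_nonneg x, norm_nonneg φ]
        have h3 : (t + n * ‖φ‖) ^ 2 ≤ ‖φ x‖ ^ 2 := by
          rw [← him]
          rw [Complex.sq_norm, Complex.normSq_apply]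
          nlinarith [sq_nonneg (φ x).re]
        calc (t + n * ‖φ‖) ^ 2 ≤ ‖φ x‖ ^ 2 := h3
        _ ≤ ‖φ‖ ^ 2 * ‖x‖ ^ 2 := h2
        _ ≤ ‖φ‖ ^ 2 * (‖a‖ ^ 2 + n ^ 2) := by gcongr
      nlinarith [happ]
    by_contra ht
    have hc : 2 * t * ‖φ‖ ≠ 0 := by
      intro h; apply ht
      rcases mul_eq_zero.mp h with h' | h'
      · rcases mul_eq_zero.mp h' with h'' | h''
        · norm_num at h''
        · exact h''
      · exact absurd h' (ne_of_gt hpos)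
    have := key ((‖φ‖ ^ 2 * ‖a‖ ^ 2 - t ^ 2 + 1) / (2 * t * ‖φ‖))
    rw [mul_div_cancel₀ _ hc] at this
    linarith
  -- nonneg elements of norm ≤ 1
  have hpos1 : ∀ a : D, 0 ≤ a → ‖a‖ ≤ 1 → 0 ≤ φ a := by
    intro a ha hn
    have hIcc : a ∈ Set.Icc 0 1 := CStarAlgebra.mem_Icc_iff_norm_le_one.mpr ⟨ha, hn⟩
    have h1a : (1 : D) - a ∈ Set.Icc 0 1 := Set.sub_mem_Icc_zero_iff_right.mpr hIcc
    have hn1 : ‖(1 : D) - a‖ ≤ 1 := (CStarAlgebra.mem_Icc_iff_norm_le_one.mp h1a).2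
    have hima : (φ a).im = 0 := him a (IsSelfAdjoint.of_nonneg ha)
    have hre : 0 ≤ (φ a).re := by
      have hphi : (φ ((1 : D) - a)).re = ‖φ‖ - (φ a).re := by
        rw [map_sub, h1]; simp
      have : (φ ((1 : D) - a)).re ≤ ‖φ‖ := by
        calc (φ ((1 : D) - a)).re ≤ ‖φ ((1 : D) - a)‖ := Complex.re_le_norm _
        _ = ‖φ ((1 : D) - a)‖ := rfl
        _ ≤ ‖φ‖ * ‖(1 : D) - a‖ := φ.le_opNorm _
        _ ≤ ‖φ‖ * 1 := by gcongr
        _ = ‖φ‖ := mul_one _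
      linarith [hphi ▸ this]
    rw [Complex.le_def]
    exact ⟨by simpa using hre, by simpa using hima.symm⟩
  -- general
  intro a
  set u := star a * a with hu
  have hu0 : 0 ≤ u := star_mul_self_nonneg a
  rcases eq_or_lt_of_le (norm_nonneg u) with h0 | hpos
  · have : u = 0 := by rw [← norm_eq_zero]; exact h0.symm
    rw [this]; simp
  · set r := ‖u‖ with hr
    have hv : 0 ≤ ((r⁻¹ : ℝ) : ℂ) • u := posFn_smul_nonneg hu0 (by positivity)
    have hvn : ‖((r⁻¹ : ℝ) : ℂ) • u‖ ≤ 1 := by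
      rw [norm_smul, Complex.norm_real, Real.norm_eq_abs,
        _root_.abs_of_nonneg (by positivity : (0:ℝ) ≤ r⁻¹)]
      rw [← hr, inv_mul_cancel₀ (ne_of_gt hpos)]
    have hφv := hpos1 _ hv hvn
    have : φ u = (r : ℂ) * φ (((r⁻¹ : ℝ) : ℂ) • u) := by
      rw [map_smul, smul_eq_mul, ← mul_assoc, ← Complex.ofReal_mul,
        mul_inv_cancel₀ (ne_of_gt hpos)]
      simp
    rw [this]
    exact mul_nonneg (by positivity) hφv

end Unital

variable {A : Type} [NonUnitalCStarAlgebra A] (B : NonUnitalStarSubalgebra ℂ A)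
  [IsClosed (B : Set A)]

set_option maxHeartbeats 1000000 in
theorem exists_normPresExt (f : ↥B →L[ℂ] ℂ) (hf : IsPosFnL f) :
    ∃ ft : A →L[ℂ] ℂ, IsNormPresExt B f ft := by
  letI : PartialOrder ↥B := nonUnitalCStarOrder
  haveI : StarOrderedRing ↥B := nonUnitalCStarStarOrderedRing
  have hl := increasingApproximateUnit ↥B
  haveI : (approximateUnit ↥B).NeBot := hl.toIsApproximateUnit.neBot
  set p : Submodule ℂ (Unitization ℂ A) :=
    (B.toNonUnitalSubalgebra.toSubmodule).comap (Unitization.sndHom ℂ ℂ A) with hp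
  have hmem : ∀ x : p, (x : Unitization ℂ A).snd ∈ B := fun x => x.2
  set F₀ : p →ₗ[ℂ] ℂ :=
    { toFun := fun x => (‖f‖ : ℂ) * (x : Unitization ℂ A).fst + f ⟨(x : Unitization ℂ A).snd, x.2⟩
      map_add' := by
        intro x y
        have h : (⟨((x + y : p) : Unitization ℂ A).snd, (x + y).2⟩ : ↥B)
            = ⟨(x : Unitization ℂ A).snd, x.2⟩ + ⟨(y : Unitization ℂ A).snd, y.2⟩ := by
          ext; simp
        rw [h]
        simp only [Submodule.coe_add, Unitization.fst_add, map_add]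
        ring
      map_smul' := by
        intro c x
        have h : (⟨((c • x : p) : Unitization ℂ A).snd, (c • x).2⟩ : ↥B)
            = c • ⟨(x : Unitization ℂ A).snd, x.2⟩ := by
          ext; simp
        rw [h]
        simp only [Submodule.coe_smul, Unitization.fst_smul, map_smul, smul_eq_mul,
          RingHom.id_apply]
        ring } with hF₀
  have hbound : ∀ x : p, ‖F₀ x‖ ≤ ‖f‖ * ‖x‖ := by
    intro x
    set lam := (x : Unitization ℂ A).fst with hlam
    set b : ↥B := ⟨(x : Unitization ℂ A).snd, x.2⟩ with hb
    set a : ↥B → ↥B := fun e => e * b * e + lam • (e * e) with ha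
    have h1 : Tendsto (fun e : ↥B => f (a e)) (approximateUnit ↥B)
        (𝓝 (f b + lam * (‖f‖ : ℂ))) := by
      have : (fun e : ↥B => f (a e))
          = fun e : ↥B => f (e * b * e) + lam * f (e * e) := by
        funext e; simp [ha, map_add, map_smul]
      rw [this]
      exact ((f.continuous.tendsto b).comp (tendsto_mul_mul b)).add
        ((tendsto_sq f hf).const_mul lam)
    have hkey : ∀ e : ↥B, ((↑(a e) : A) : Unitization ℂ A)
        = ((e : A) : Unitization ℂ A) * (x : Unitization ℂ A) * ((e : A) : Unitization ℂ A) := by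
      intro e
      conv_rhs => rw [← Unitization.inl_fst_add_inr_snd_eq (x : Unitization ℂ A)]
      rw [mul_add, add_mul, Unitization.inr_mul_inl, ← Unitization.inr_mul,
        ← Unitization.inr_mul, ← Unitization.inr_mul, ← Unitization.inr_add]
      have hcoe : (↑(a e) : A) = lam • (e : A) * (e : A) + (e : A) * (b : A) * (e : A) := by
        simp [ha, smul_mul_assoc]
        abel
      rw [hcoe]
    have h2 : ∀ᶠ e in approximateUnit ↥B, ‖f (a e)‖ ≤ ‖f‖ * ‖(x : Unitization ℂ A)‖ := by
      filter_upwards [hl.eventually_norm] with e he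
      have hae : ‖a e‖ ≤ ‖(x : Unitization ℂ A)‖ := by
        have : ‖a e‖ = ‖((↑(a e) : A) : Unitization ℂ A)‖ := by
          rw [Unitization.norm_inr]; rfl
        rw [this, hkey e]
        calc ‖((e : A) : Unitization ℂ A) * (x : Unitization ℂ A) * ((e : A) : Unitization ℂ A)‖
            ≤ ‖((e : A) : Unitization ℂ A) * (x : Unitization ℂ A)‖ * ‖((e : A) : Unitization ℂ A)‖ :=
              norm_mul_le _ _
        _ ≤ ‖((e : A) : Unitization ℂ A)‖ * ‖(x : Unitization ℂ A)‖ * ‖((e : A) : Unitization ℂ A)‖ := by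
              gcongr; exact norm_mul_le _ _
        _ ≤ 1 * ‖(x : Unitization ℂ A)‖ * 1 := by
              have : ‖((e : A) : Unitization ℂ A)‖ ≤ 1 := by
                rw [Unitization.norm_inr]; exact he
              gcongr
        _ = ‖(x : Unitization ℂ A)‖ := by ring
      calc ‖f (a e)‖ ≤ ‖f‖ * ‖a e‖ := f.le_opNorm _
      _ ≤ ‖f‖ * ‖(x : Unitization ℂ A)‖ := by gcongr
    have hlim : ‖f b + lam * (‖f‖ : ℂ)‖ ≤ ‖f‖ * ‖(x : Unitization ℂ A)‖ :=
      le_of_tendsto h1.norm h2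
    have : F₀ x = f b + lam * (‖f‖ : ℂ) := by
      show (‖f‖ : ℂ) * (x : Unitization ℂ A).fst + f b = f b + lam * (‖f‖ : ℂ)
      rw [← hlam]; ring
    rw [this]
    exact hlim
  -- continue
  set F : p →L[ℂ] ℂ := F₀.mkContinuous ‖f‖ hbound with hF
  obtain ⟨Φ, hext, hΦn⟩ := exists_extension_norm_eq p F
  have hFle : ‖F‖ ≤ ‖f‖ := F₀.mkContinuous_norm_le (norm_nonneg f) hbound
  have hone : (1 : Unitization ℂ A) ∈ p := by
    simp [hp, Submodule.mem_comap]
  have hΦ1 : Φ 1 = (‖f‖ : ℂ) := by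
    have := hext ⟨1, hone⟩
    rw [show ((⟨1, hone⟩ : p) : Unitization ℂ A) = 1 from rfl] at this
    rw [this]
    show (‖f‖ : ℂ) * (1 : Unitization ℂ A).fst + f ⟨(1 : Unitization ℂ A).snd, _⟩ = _
    have h0 : (⟨(1 : Unitization ℂ A).snd, hone⟩ : ↥B) = 0 := by ext; simp
    rw [h0]
    simp
  have hΦnorm : ‖Φ‖ = ‖f‖ := by
    refine le_antisymm (hΦn ▸ hFle) ?_
    calc ‖f‖ = ‖Φ 1‖ := by
          rw [hΦ1, Complex.norm_real, Real.norm_eq_abs, _root_.abs_of_nonneg (norm_nonneg f)]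
    _ ≤ ‖Φ‖ * ‖(1 : Unitization ℂ A)‖ := Φ.le_opNorm _
    _ = ‖Φ‖ := by rw [norm_one, mul_one]
  have hΦpos : ∀ z : Unitization ℂ A, 0 ≤ Φ (star z * z) :=
    posFn_of_apply_one_eq_norm Φ (by rw [hΦ1, hΦnorm])
  -- the restriction to A
  have hcont : Continuous (Unitization.inr : A → Unitization ℂ A) :=
    Unitization.isometry_inr.continuous
  set ι : A →L[ℂ] Unitization ℂ A :=
    { toFun := Unitization.inr
      map_add' := fun a b => Unitization.inr_add ℂ a b
      map_smul' := fun c a => by simp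
      cont := hcont } with hι
  refine ⟨Φ.comp ι, ?_, ?_, ?_⟩
  · intro a
    have : ι a = Unitization.inr a := rfl
    show 0 ≤ Φ (ι (star a * a))
    have h2 : ι (star a * a) = star (Unitization.inr a : Unitization ℂ A) * Unitization.inr a := by
      show (Unitization.inr (star a * a) : Unitization ℂ A) = _
      rw [← Unitization.inr_star, ← Unitization.inr_mul]
    rw [h2]
    exact hΦpos _
  · intro b
    show Φ (Unitization.inr (b : A)) = f b
    have hbm : (Unitization.inr (b : A) : Unitization ℂ A) ∈ p := by
      simp [hp, Submodule.mem_comap]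
    have := hext ⟨_, hbm⟩
    rw [show ((⟨_, hbm⟩ : p) : Unitization ℂ A) = Unitization.inr (b : A) from rfl] at this
    rw [this]
    show (‖f‖ : ℂ) * (Unitization.inr (b : A) : Unitization ℂ A).fst
        + f ⟨(Unitization.inr (b : A) : Unitization ℂ A).snd, _⟩ = f b
    have hb' : (⟨(Unitization.inr (b : A) : Unitization ℂ A).snd, hbm⟩ : ↥B) = b := by ext; simp
    rw [hb']
    simp
  · refine le_antisymm ?_ ?_
    · refine (Φ.comp ι).opNorm_le_bound (norm_nonneg f) fun z => ?_
      calc ‖Φ (ι z)‖ ≤ ‖Φ‖ * ‖ι z‖ := Φ.le_opNorm _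
      _ = ‖f‖ * ‖z‖ := by
          rw [hΦnorm]
          congr 1
          exact Unitization.norm_inr z
    · refine f.opNorm_le_bound (norm_nonneg _) fun b => ?_
      have hfb : f b = Φ.comp ι ((b : A)) := by
        show f b = Φ (Unitization.inr (b : A))
        have hbm : (Unitization.inr (b : A) : Unitization ℂ A) ∈ p := by
          simp [hp, Submodule.mem_comap]
        have := hext ⟨_, hbm⟩
        rw [show ((⟨_, hbm⟩ : p) : Unitization ℂ A) = Unitization.inr (b : A) from rfl] at this
        rw [this]
        show _ = (‖f‖ : ℂ) * (Unitization.inr (b : A) : Unitization ℂ A).fst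
            + f ⟨(Unitization.inr (b : A) : Unitization ℂ A).snd, _⟩
        have hb' : (⟨(Unitization.inr (b : A) : Unitization ℂ A).snd, hbm⟩ : ↥B) = b := by
          ext; simp
        rw [hb']
        simp
      calc ‖f b‖ = ‖Φ.comp ι ((b : A))‖ := by rw [hfb]
      _ ≤ ‖Φ.comp ι‖ * ‖(b : A)‖ := (Φ.comp ι).le_opNorm _
      _ = ‖Φ.comp ι‖ * ‖b‖ := rfl

end Auxiliary

/-- **Lemma 2.6 (1)**: for positive functionals `f, g` on a closed `⋆`-subalgebra `B` of a
C⋆-algebra `A`, `f ≤ g` holds iff there exist norm-preserving positive extensions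
`f̃, g̃` of `f` and `g` to `A` with `f̃ ≤ g̃`. -/
theorem fnLE_iff_exists_normPres_extensions
    {A : Type} [NonUnitalCStarAlgebra A]
    (B : NonUnitalStarSubalgebra ℂ A) [IsClosed (B : Set A)]
    (f g : ↥B →L[ℂ] ℂ) (hf : IsPosFnL f) (hg : IsPosFnL g) :
    FnLEL f g ↔
      ∃ ft gt : A →L[ℂ] ℂ, IsNormPresExt B f ft ∧ IsNormPresExt B g gt ∧ FnLEL ft gt := by
  constructor
  · intro hfg
    obtain ⟨ft, hft⟩ := exists_normPresExt B f hf
    obtain ⟨dt, hdt⟩ := exists_normPresExt B (g - f) hfg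
    refine ⟨ft, ft + dt, hft, ⟨?_, ?_, ?_⟩, ?_⟩
    · intro a
      have := add_nonneg (hft.1 a) (hdt.1 a)
      simpa [ContinuousLinearMap.add_apply] using this
    · intro b
      simp only [ContinuousLinearMap.add_apply, hft.2.1 b, hdt.2.1 b,
        ContinuousLinearMap.sub_apply]
      ring
    · -- ‖ft + dt‖ = ‖g‖
      letI : PartialOrder ↥B := nonUnitalCStarOrder
      haveI : StarOrderedRing ↥B := nonUnitalCStarStarOrderedRing
      have hadd : ‖f + (g - f)‖ = ‖f‖ + ‖g - f‖ := posFn_norm_add f (g - f) hf hfg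
      have hfg' : f + (g - f) = g := by abel
      rw [hfg'] at hadd
      refine le_antisymm ?_ ?_
      · calc ‖ft + dt‖ ≤ ‖ft‖ + ‖dt‖ := norm_add_le _ _
        _ = ‖f‖ + ‖g - f‖ := by rw [hft.2.2, hdt.2.2]
        _ = ‖g‖ := hadd.symm
      · refine g.opNorm_le_bound (norm_nonneg _) fun b => ?_
        have : g b = (ft + dt) ((b : A)) := by
          simp only [ContinuousLinearMap.add_apply, hft.2.1 b, hdt.2.1 b,
            ContinuousLinearMap.sub_apply]
          ring
        calc ‖g b‖ = ‖(ft + dt) ((b : A))‖ := by rw [this]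
        _ ≤ ‖ft + dt‖ * ‖(b : A)‖ := (ft + dt).le_opNorm _
        _ = ‖ft + dt‖ * ‖b‖ := rfl
    · intro a
      have h : (ft + dt) - ft = dt := by abel
      rw [h]
      exact hdt.1 a
  · rintro ⟨ft, gt, hft, hgt, hle⟩
    intro b
    have e2 : ((star b * b : ↥B) : A) = star (b : A) * (b : A) := by
      push_cast
      rfl
    have e1 : (g - f) (star b * b) = (gt - ft) (star (b : A) * (b : A)) := by
      rw [ContinuousLinearMap.sub_apply, ContinuousLinearMap.sub_apply,
        ← hft.2.1, ← hgt.2.1, ← e2]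
    rw [e1]
    exact hle ((b : A))
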